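/- Define the ordinal |β|_≺ := [β] + λ_1 Σ_{n≠0} |n| β(n) + λ_2 β(0) on multi-indices, with fixed 1 > λ_1 > λ_2 > 0. Then the strict ordering β' ≺ β defined by |β'|_≺ < |β|_≺ is coercive on populated multi-indices: for every β, the set {γ : γ populated and γ ≺ β} is finite. -/
import Mathlib


/-- Nonzero spatial multi-indices `n ∈ ℕ₀^{1+d} \ {0}`. -/
abbrev SpatialIdx (d : ℕ) := {n : Fin (d + 1) →₀ ℕ // n ≠ 0}

/-- Multi-indices `β : ℕ₀ ∪ (ℕ₀^{1+d} \ {0}) → ℕ₀`, finitely supported. -/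
abbrev MultiIndex (d : ℕ) := (ℕ ⊕ SpatialIdx d) →₀ ℕ

/-- The parabolic degree `|n| = 2 n₀ + n₁ + ⋯ + n_d` of a spatial multi-index. -/
def pdeg {d : ℕ} (n : Fin (d + 1) →₀ ℕ) : ℕ :=
  n 0 + n.sum fun _ k => k

/-- `[β] := Σ_k k β(k) − Σ_{n≠0} β(n)`. -/
def noiseHom {d : ℕ} (β : MultiIndex d) : ℤ :=
  β.sum fun i m =>
    match i with
    | Sum.inl k => (k : ℤ) * (m : ℤ)
    | Sum.inr _ => -(m : ℤ)

/-- The polynomial contribution `Σ_{n≠0} |n| β(n)` to the homogeneity. -/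
def polyDeg {d : ℕ} (β : MultiIndex d) : ℕ :=
  β.sum fun i m =>
    match i with
    | Sum.inl _ => 0
    | Sum.inr n => pdeg n.1 * m

/-- The homogeneity `|β| := α(1 + [β]) + Σ_{n≠0} |n| β(n)`. -/
noncomputable def hom {d : ℕ} (α : ℝ) (β : MultiIndex d) : ℝ :=
  α * (1 + (noiseHom β : ℝ)) + (polyDeg β : ℝ)

/-- `β` is populated if `[β] ≥ 0` or `β = e_n` for some `n ≠ 0` (purely polynomial). -/
def Populated {d : ℕ} (β : MultiIndex d) : Prop :=
  0 ≤ noiseHom β ∨ ∃ n : SpatialIdx d, β = Finsupp.single (Sum.inr n) 1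

/-- The ordinal `|β|_≺ := [β] + λ₁ Σ_{n≠0} |n| β(n) + λ₂ β(k=0)`. -/
noncomputable def ordFn {d : ℕ} (lam1 lam2 : ℝ) (β : MultiIndex d) : ℝ :=
  (noiseHom β : ℝ) + lam1 * (polyDeg β : ℝ) + lam2 * (β (Sum.inl 0) : ℝ)

def Aidx {d : ℕ} (γ : MultiIndex d) : ℕ :=
  γ.sum fun i m => match i with | Sum.inl k => k * m | Sum.inr _ => 0
def Bidx {d : ℕ} (γ : MultiIndex d) : ℕ :=
  γ.sum fun i m => match i with | Sum.inl _ => 0 | Sum.inr _ => m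

lemma noiseHom_eq {d : ℕ} (γ : MultiIndex d) :
    noiseHom γ = (Aidx γ : ℤ) - (Bidx γ : ℤ) := by
  unfold noiseHom Aidx Bidx Finsupp.sum
  push_cast
  rw [← Finset.sum_sub_distrib]
  refine Finset.sum_congr rfl fun i _ => ?_
  rcases i with k | n <;> simp

lemma one_le_pdeg {d : ℕ} (n : Fin (d + 1) →₀ ℕ) (hn : n ≠ 0) : 1 ≤ pdeg n := by
  obtain ⟨i, hi⟩ := Finsupp.support_nonempty_iff.2 hn
  have h1 : n i ≤ n.sum fun _ k => k :=
    Finset.single_le_sum (fun _ _ => Nat.zero_le _) hi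
  have h2 : 1 ≤ n i := Nat.one_le_iff_ne_zero.2 (Finsupp.mem_support_iff.1 hi)
  unfold pdeg; omega

lemma Bidx_le_polyDeg {d : ℕ} (γ : MultiIndex d) : Bidx γ ≤ polyDeg γ := by
  unfold Bidx polyDeg Finsupp.sum
  refine Finset.sum_le_sum fun i _ => ?_
  rcases i with k | n
  · simp
  · simpa using Nat.le_mul_of_pos_left (γ (Sum.inr n)) (one_le_pdeg n.1 n.2)

lemma term_le_polyDeg {d : ℕ} (γ : MultiIndex d) {n : SpatialIdx d}
    (h : Sum.inr n ∈ γ.support) : pdeg n.1 * γ (Sum.inr n) ≤ polyDeg γ := by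
  unfold polyDeg Finsupp.sum
  exact Finset.single_le_sum (f := fun i => match i with
    | Sum.inl _ => 0 | Sum.inr n => pdeg n.1 * γ i) (fun _ _ => Nat.zero_le _) h

lemma term_le_Aidx {d : ℕ} (γ : MultiIndex d) {k : ℕ}
    (h : Sum.inl k ∈ γ.support) : k * γ (Sum.inl k) ≤ Aidx γ := by
  unfold Aidx Finsupp.sum
  exact Finset.single_le_sum (f := fun i => match i with
    | Sum.inl k => k * γ i | Sum.inr _ => 0) (fun _ _ => Nat.zero_le _) h

lemma finite_bounded {ι : Type*} (S : Set ι) (hS : S.Finite) (M : ℕ) :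
    {f : ι →₀ ℕ | ↑f.support ⊆ S ∧ ∀ i, f i ≤ M}.Finite := by
  refine ((hS.toFinset.finsupp fun _ => Finset.range (M + 1)).finite_toSet).subset ?_
  intro f hf
  rw [Finset.mem_coe, Finset.mem_finsupp_iff]
  exact ⟨fun i hi => hS.mem_toFinset.2 (hf.1 hi),
    fun i _ => Finset.mem_range.2 (Nat.lt_succ_of_le (hf.2 i))⟩

lemma finite_pdeg_le {d : ℕ} (M : ℕ) : {n : Fin (d + 1) →₀ ℕ | pdeg n ≤ M}.Finite := by
  apply (finite_bounded Set.univ Set.finite_univ M).subset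
  intro n hn
  refine ⟨Set.subset_univ _, fun i => ?_⟩
  by_cases hi : i ∈ n.support
  · have h1 : n i ≤ n.sum fun _ k => k :=
      Finset.single_le_sum (fun _ _ => Nat.zero_le _) hi
    have h2 : n 0 + n.sum (fun _ k => k) ≤ M := hn
    omega
  · simp [Finsupp.notMem_support_iff.1 hi]

theorem ord_coercive' {d : ℕ} (lam1 lam2 : ℝ)
    (h2 : 0 < lam2) (h12 : lam2 < lam1) (h1 : lam1 < 1)
    (β : MultiIndex d) :
    {γ : MultiIndex d | (0 ≤ noiseHom γ ∨ ∃ n : SpatialIdx d, γ = Finsupp.single (Sum.inr n) 1)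
      ∧ (noiseHom γ : ℝ) + lam1 * polyDeg γ + lam2 * γ (Sum.inl 0)
        < (noiseHom β : ℝ) + lam1 * polyDeg β + lam2 * β (Sum.inl 0)}.Finite := by
  set C : ℝ := (noiseHom β : ℝ) + lam1 * polyDeg β + lam2 * β (Sum.inl 0) with hCdef
  set R : ℝ := (|C| + 1) / lam2 with hRdef
  set M : ℕ := ⌈|C| + R⌉₊ + 1 with hMdef
  have hRM : |C| + R ≤ (M : ℝ) := by
    have := Nat.le_ceil (|C| + R)
    have : (⌈|C| + R⌉₊ : ℝ) ≤ M := by exact_mod_cast Nat.le_succ _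
    linarith [Nat.le_ceil (|C| + R)]
  have hR0 : 0 ≤ R := div_nonneg (by positivity) h2.le
  have habs : (0:ℝ) ≤ |C| := abs_nonneg C
  set S : Set (ℕ ⊕ SpatialIdx d) :=
    Sum.inl '' Set.Iic M ∪ Sum.inr '' {n : SpatialIdx d | pdeg n.1 ≤ M} with hSdef
  have hS : S.Finite := ((Set.finite_Iic M).image _).union
    (((finite_pdeg_le M).preimage Subtype.val_injective.injOn).image _)
  apply (finite_bounded S hS M).subset
  rintro γ ⟨hpop, hlt⟩
  have hNge : (-1 : ℝ) ≤ (noiseHom γ : ℝ) := by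
    rcases hpop with h | ⟨n, rfl⟩
    · have : (0:ℝ) ≤ (noiseHom γ : ℝ) := by exact_mod_cast h
      linarith
    · have he : noiseHom (Finsupp.single (Sum.inr n) 1) = -1 := by
        unfold noiseHom
        rw [Finsupp.sum_single_index] <;> simp
      rw [he]; norm_num
  have hlam1 : (0:ℝ) < lam1 := h2.trans h12
  have hP0 : (0:ℝ) ≤ lam1 * (polyDeg γ : ℝ) := mul_nonneg hlam1.le (Nat.cast_nonneg _)
  have h00 : (0:ℝ) ≤ lam2 * (γ (Sum.inl 0) : ℝ) := mul_nonneg h2.le (Nat.cast_nonneg _)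
  have hCle : C ≤ |C| := le_abs_self C
  have hPle : (polyDeg γ : ℝ) ≤ R := by
    rw [hRdef, le_div_iff₀ h2]
    have : lam2 * (polyDeg γ : ℝ) ≤ lam1 * (polyDeg γ : ℝ) :=
      mul_le_mul_of_nonneg_right h12.le (Nat.cast_nonneg _)
    nlinarith
  have h0le : (γ (Sum.inl 0) : ℝ) ≤ R := by
    rw [hRdef, le_div_iff₀ h2]
    nlinarith
  have hAle : (Aidx γ : ℝ) ≤ |C| + R := by
    have hAB : (Aidx γ : ℝ) = (noiseHom γ : ℝ) + (Bidx γ : ℝ) := by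
      rw [noiseHom_eq]; push_cast; ring
    have hBP : (Bidx γ : ℝ) ≤ (polyDeg γ : ℝ) := by exact_mod_cast Bidx_le_polyDeg γ
    linarith
  have hPM : polyDeg γ ≤ M := by
    have : (polyDeg γ : ℝ) ≤ (M : ℝ) := by linarith
    exact_mod_cast this
  have hAM : Aidx γ ≤ M := by
    have : (Aidx γ : ℝ) ≤ (M : ℝ) := le_trans hAle hRM
    exact_mod_cast this
  have h0M : γ (Sum.inl 0) ≤ M := by
    have : (γ (Sum.inl 0) : ℝ) ≤ (M : ℝ) := by linarith
    exact_mod_cast this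
  have hmem : ∀ i ∈ γ.support, (i ∈ S ∧ γ i ≤ M) := by
    intro i hi
    have hpos : 1 ≤ γ i := Nat.one_le_iff_ne_zero.2 (Finsupp.mem_support_iff.1 hi)
    rcases i with k | n
    · have hk : k * γ (Sum.inl k) ≤ Aidx γ := term_le_Aidx γ hi
      constructor
      · exact Or.inl ⟨k, by simpa using le_trans (Nat.le_mul_of_pos_right k hpos) (le_trans hk hAM), rfl⟩
      · rcases Nat.eq_zero_or_pos k with rfl | hk1
        · exact h0M
        · calc γ (Sum.inl k) ≤ k * γ (Sum.inl k) := Nat.le_mul_of_pos_left _ hk1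
            _ ≤ M := le_trans hk hAM
    · have hn : pdeg n.1 * γ (Sum.inr n) ≤ polyDeg γ := term_le_polyDeg γ hi
      have h1n : 1 ≤ pdeg n.1 := one_le_pdeg n.1 n.2
      constructor
      · exact Or.inr ⟨n, le_trans (Nat.le_mul_of_pos_right _ hpos) (le_trans hn hPM), rfl⟩
      · calc γ (Sum.inr n) ≤ pdeg n.1 * γ (Sum.inr n) := Nat.le_mul_of_pos_left _ h1n
          _ ≤ M := le_trans hn hPM
  constructor
  · intro i hi
    exact (hmem i (Finset.mem_coe.1 hi)).1
  · intro i
    by_cases hi : i ∈ γ.support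
    · exact (hmem i hi).2
    · simp [Finsupp.notMem_support_iff.1 hi]

/-- Coercivity of the ordering `≺`: for every multi-index `β`, the set of populated
multi-indices `γ` with `|γ|_≺ < |β|_≺` is finite. -/
theorem ord_coercive {d : ℕ} (lam1 lam2 : ℝ)
    (h2 : 0 < lam2) (h12 : lam2 < lam1) (h1 : lam1 < 1)
    (β : MultiIndex d) :
    {γ : MultiIndex d | Populated γ ∧ ordFn lam1 lam2 γ < ordFn lam1 lam2 β}.Finite := by
  exact ord_coercive' lam1 lam2 h2 h12 h1 β
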